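/- Let (S, ĥ) be a 2-dimensional oriented Riemannian manifold and Z : S → ℝ a smooth function whose Hessian satisfies Hess Z = (u∘Z) ĥ for a smooth function u : ℝ → ℝ. Then the scalar curvature R(ĥ) satisfies R(ĥ) · dZ = -2 (u'∘Z) dZ; in particular, at points where dZ ≠ 0, R(ĥ) = -2 u'(Z). -/

import Mathlib

open Finset

noncomputable section

/-- Partial derivative `∂_μ f` of a real-valued function on ℝⁿ (coordinates). -/
def pd {n : ℕ} (μ : Fin n) (f : (Fin n → ℝ) → ℝ) (x : Fin n → ℝ) : ℝ :=
  fderiv ℝ f x (Pi.single μ 1)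

/-- Partial derivative `∂_μ f` of a complex-valued function on ℝⁿ. -/
def pdC {n : ℕ} (μ : Fin n) (f : (Fin n → ℝ) → ℂ) (x : Fin n → ℝ) : ℂ :=
  fderiv ℝ f x (Pi.single μ 1)

/-- Christoffel symbols `Γ^α_{μν}` of a metric `g` with inverse `ginv`. -/
def chr {n : ℕ} (g ginv : (Fin n → ℝ) → Fin n → Fin n → ℝ)
    (x : Fin n → ℝ) (α μ ν : Fin n) : ℝ :=
  (1 / 2) * ∑ ρ, ginv x α ρ *
    (pd μ (fun y => g y ρ ν) x + pd ν (fun y => g y ρ μ) x - pd ρ (fun y => g y μ ν) x)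

/-- Ricci tensor `R_{σν} = R^μ{}_{σμν}` of the metric `g`. -/
def Ric {n : ℕ} (g ginv : (Fin n → ℝ) → Fin n → Fin n → ℝ)
    (x : Fin n → ℝ) (σ ν : Fin n) : ℝ :=
  ∑ μ, (pd μ (fun y => chr g ginv y μ ν σ) x - pd ν (fun y => chr g ginv y μ μ σ) x
    + ∑ l, (chr g ginv x μ μ l * chr g ginv x l ν σ - chr g ginv x μ ν l * chr g ginv x l μ σ))

/-- The covector `ξ_ν = g_{νρ} ξ^ρ` obtained by lowering the index of a vector field. -/
def lowV {n : ℕ} (g : (Fin n → ℝ) → Fin n → Fin n → ℝ) (ξ : (Fin n → ℝ) → Fin n → ℝ)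
    (x : Fin n → ℝ) (ν : Fin n) : ℝ :=
  ∑ ρ, g x ν ρ * ξ x ρ

/-- The covariant derivative `∇_μ ξ_ν` of (the covector associated to) a vector field. -/
def nablaLow {n : ℕ} (g ginv : (Fin n → ℝ) → Fin n → Fin n → ℝ)
    (ξ : (Fin n → ℝ) → Fin n → ℝ) (x : Fin n → ℝ) (μ ν : Fin n) : ℝ :=
  pd μ (fun y => lowV g ξ y ν) x - ∑ ρ, chr g ginv x ρ μ ν * lowV g ξ x ρ

end

noncomputable section

/-- The Hessian `D_A D_B Z = ∂_A ∂_B Z - Γ^C_{AB} ∂_C Z` of a function. -/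
def hess {n : ℕ} (g ginv : (Fin n → ℝ) → Fin n → Fin n → ℝ) (Z : (Fin n → ℝ) → ℝ)
    (x : Fin n → ℝ) (A B : Fin n) : ℝ :=
  pd A (fun y => pd B Z y) x - ∑ C, chr g ginv x C A B * pd C Z x

/-- The scalar curvature `R = g^{AB} Ric_{AB}`. -/
def scal {n : ℕ} (g ginv : (Fin n → ℝ) → Fin n → Fin n → ℝ) (x : Fin n → ℝ) : ℝ :=
  ∑ A, ∑ B, ginv x A B * Ric g ginv x A B

end


noncomputable section

section AuxCalc

private lemma aux_contDiff_pd {n : ℕ} {f : (Fin n → ℝ) → ℝ} (hf : ContDiff ℝ (⊤ : ℕ∞) f) (μ : Fin n) :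
    ContDiff ℝ (⊤ : ℕ∞) (pd μ f) :=
  (hf.fderiv_right (m := (⊤ : ℕ∞)) le_rfl).clm_apply contDiff_const

private lemma aux_pd_congr {n : ℕ} {f g : (Fin n → ℝ) → ℝ} (h : ∀ y, f y = g y) (μ : Fin n)
    (x : Fin n → ℝ) : pd μ f x = pd μ g x := by
  have : f = g := funext h
  rw [pd, pd, this]

private lemma aux_pd_add {n : ℕ} {f g : (Fin n → ℝ) → ℝ} (μ : Fin n) (x : Fin n → ℝ)
    (hf : DifferentiableAt ℝ f x) (hg : DifferentiableAt ℝ g x) :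
    pd μ (fun y => f y + g y) x = pd μ f x + pd μ g x := by
  simp only [pd, fderiv_fun_add hf hg]; rfl

private lemma aux_pd_mul {n : ℕ} {f g : (Fin n → ℝ) → ℝ} (μ : Fin n) (x : Fin n → ℝ)
    (hf : DifferentiableAt ℝ f x) (hg : DifferentiableAt ℝ g x) :
    pd μ (fun y => f y * g y) x = pd μ f x * g x + f x * pd μ g x := by
  simp only [pd, fderiv_fun_mul hf hg]
  simp [ContinuousLinearMap.add_apply, ContinuousLinearMap.smul_apply]
  ring

private lemma aux_pd_const_mul {n : ℕ} {f : (Fin n → ℝ) → ℝ} (c : ℝ) (μ : Fin n) (x : Fin n → ℝ)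
    (hf : DifferentiableAt ℝ f x) :
    pd μ (fun y => c * f y) x = c * pd μ f x := by
  simp only [pd, fderiv_const_mul hf c]; rfl

private lemma aux_pd_sub {n : ℕ} {f g : (Fin n → ℝ) → ℝ} (μ : Fin n) (x : Fin n → ℝ)
    (hf : DifferentiableAt ℝ f x) (hg : DifferentiableAt ℝ g x) :
    pd μ (fun y => f y - g y) x = pd μ f x - pd μ g x := by
  simp only [pd, fderiv_fun_sub hf hg]; rfl

private lemma aux_pd_sum {n m : ℕ} {f : Fin m → (Fin n → ℝ) → ℝ} (μ : Fin n) (x : Fin n → ℝ)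
    (hf : ∀ i, DifferentiableAt ℝ (f i) x) :
    pd μ (fun y => ∑ i, f i y) x = ∑ i, pd μ (f i) x := by
  simp only [pd, fderiv_fun_sum (fun i _ => hf i)]
  simp

private lemma aux_pd_comp {n : ℕ} {Z : (Fin n → ℝ) → ℝ} {u : ℝ → ℝ} (μ : Fin n) (x : Fin n → ℝ)
    (hZ : DifferentiableAt ℝ Z x) (hu : DifferentiableAt ℝ u (Z x)) :
    pd μ (fun y => u (Z y)) x = deriv u (Z x) * pd μ Z x := by
  simp only [pd]
  rw [show (fun y => u (Z y)) = u ∘ Z from rfl, fderiv_comp x hu hZ]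
  simp only [ContinuousLinearMap.comp_apply]
  have h : ∀ (L : ℝ →L[ℝ] ℝ) (s : ℝ), L s = s * L 1 := by
    intro L s
    rw [← smul_eq_mul, ← L.map_smul, smul_eq_mul, mul_one]
  rw [h (fderiv ℝ u (Z x)), fderiv_apply_one_eq_deriv]
  ring

private lemma aux_pd_comm {n : ℕ} {f : (Fin n → ℝ) → ℝ} (hf : ContDiff ℝ (⊤ : ℕ∞) f) (A B : Fin n)
    (x : Fin n → ℝ) : pd A (fun y => pd B f y) x = pd B (fun y => pd A f y) x := by
  have hd : ∀ y, HasFDerivAt f (fderiv ℝ f y) y := fun y =>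
    (hf.differentiable (by simp) y).hasFDerivAt
  have hd2 : HasFDerivAt (fderiv ℝ f) (fderiv ℝ (fderiv ℝ f) x) x :=
    (((hf.fderiv_right (m := (⊤ : ℕ∞)) le_rfl).differentiable (by simp)) x).hasFDerivAt
  have hsym := second_derivative_symmetric hd hd2 (Pi.single A 1) (Pi.single B 1)
  have key : ∀ (v w : Fin n → ℝ),
      fderiv ℝ (fun y => fderiv ℝ f y w) x v = fderiv ℝ (fderiv ℝ f) x v w := by
    intro v w
    have hc : DifferentiableAt ℝ (fderiv ℝ f) x :=
      ((hf.fderiv_right (m := (⊤ : ℕ∞)) le_rfl).differentiable (by simp)) x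
    rw [fderiv_clm_apply hc (differentiableAt_const w)]
    simp
  simp only [pd]
  rw [key, key, hsym]

private lemma aux_chr_contDiff {n : ℕ} {g ginv : (Fin n → ℝ) → Fin n → Fin n → ℝ}
    (hg : ∀ A B, ContDiff ℝ (⊤ : ℕ∞) fun x => g x A B)
    (hginv : ∀ A B, ContDiff ℝ (⊤ : ℕ∞) fun x => ginv x A B) (α μ ν : Fin n) :
    ContDiff ℝ (⊤ : ℕ∞) (fun x => chr g ginv x α μ ν) := by
  unfold chr
  exact contDiff_const.mul (ContDiff.sum fun ρ _ => (hginv α ρ).mul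
    (((aux_contDiff_pd (hg ρ ν) μ).add (aux_contDiff_pd (hg ρ μ) ν)).sub
      (aux_contDiff_pd (hg μ ν) ρ)))

private lemma aux_first_kind {n : ℕ} {g ginv : (Fin n → ℝ) → Fin n → Fin n → ℝ}
    (hinv : ∀ x A B, ∑ C, g x A C * ginv x C B = if A = B then 1 else 0)
    (x : Fin n → ℝ) (D A B : Fin n) :
    ∑ C, g x D C * chr g ginv x C A B
      = (1/2) * (pd A (fun y => g y D B) x + pd B (fun y => g y D A) x
          - pd D (fun y => g y A B) x) := by
  unfold chr
  have h1 : ∀ C, g x D C * ((1:ℝ)/2 * ∑ ρ, ginv x C ρ *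
      (pd A (fun y => g y ρ B) x + pd B (fun y => g y ρ A) x - pd ρ (fun y => g y A B) x))
      = ∑ ρ, (1/2) * (g x D C * ginv x C ρ) *
      (pd A (fun y => g y ρ B) x + pd B (fun y => g y ρ A) x - pd ρ (fun y => g y A B) x) := by
    intro C
    rw [Finset.mul_sum, Finset.mul_sum]
    exact Finset.sum_congr rfl fun ρ _ => by ring
  rw [Finset.sum_congr rfl fun C _ => h1 C, Finset.sum_comm]
  have h2 : ∀ ρ, (∑ C, (1:ℝ)/2 * (g x D C * ginv x C ρ) *
      (pd A (fun y => g y ρ B) x + pd B (fun y => g y ρ A) x - pd ρ (fun y => g y A B) x))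
      = (1/2) * (if D = ρ then 1 else 0) *
      (pd A (fun y => g y ρ B) x + pd B (fun y => g y ρ A) x - pd ρ (fun y => g y A B) x) := by
    intro ρ
    rw [← hinv x D ρ, Finset.mul_sum, Finset.sum_mul]
  rw [Finset.sum_congr rfl fun ρ _ => h2 ρ]
  simp [Finset.sum_ite_eq]

end AuxCalc
def KK {n : ℕ} (g ginv : (Fin n → ℝ) → Fin n → Fin n → ℝ)
    (x : Fin n → ℝ) (E D A B : Fin n) : ℝ :=
  pd D (fun y => chr g ginv y E A B) x - pd A (fun y => chr g ginv y E D B) x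
  + ∑ C, (chr g ginv x E D C * chr g ginv x C A B - chr g ginv x E A C * chr g ginv x C D B)

private lemma aux_KK_swap (g ginv : (Fin 2 → ℝ) → Fin 2 → Fin 2 → ℝ) (x : Fin 2 → ℝ)
    (E D A B : Fin 2) : KK g ginv x E A D B = -KK g ginv x E D A B := by
  simp only [KK, Fin.sum_univ_two]; ring

private lemma aux_KK_diag (g ginv : (Fin 2 → ℝ) → Fin 2 → Fin 2 → ℝ) (x : Fin 2 → ℝ)
    (E D B : Fin 2) : KK g ginv x E D D B = 0 := by
  simp only [KK, Fin.sum_univ_two]; ring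

private lemma aux_star (g ginv : (Fin 2 → ℝ) → Fin 2 → Fin 2 → ℝ) (Z : (Fin 2 → ℝ) → ℝ)
    (u : ℝ → ℝ)
    (hgsmooth : ∀ A B, ContDiff ℝ (⊤ : ℕ∞) fun x => g x A B)
    (hginvsmooth : ∀ A B, ContDiff ℝ (⊤ : ℕ∞) fun x => ginv x A B)
    (hgsym : ∀ x A B, g x A B = g x B A)
    (hinv : ∀ x A B, ∑ C, g x A C * ginv x C B = if A = B then 1 else 0)
    (hZ : ContDiff ℝ (⊤ : ℕ∞) Z) (hu : ContDiff ℝ (⊤ : ℕ∞) u)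
    (hhess : ∀ x A B, hess g ginv Z x A B = u (Z x) * g x A B)
    (x : Fin 2 → ℝ) (B : Fin 2) :
    deriv u (Z x) * (pd 0 Z x * g x 1 B - pd 1 Z x * g x 0 B)
      + ∑ E, KK g ginv x E 0 1 B * pd E Z x = 0 := by
  have hchr : ∀ α μ ν, ContDiff ℝ (⊤ : ℕ∞) (fun y => chr g ginv y α μ ν) :=
    aux_chr_contDiff hgsmooth hginvsmooth
  -- the Hessian relation in explicit form
  have hz : ∀ (y : Fin 2 → ℝ) (A B : Fin 2), pd A (fun w => pd B Z w) y
      = u (Z y) * g y A B + ∑ C, chr g ginv y C A B * pd C Z y := by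
    intro y A B
    have h := hhess y A B
    rw [hess] at h
    linarith
  -- expansion of the third derivative
  have exp : ∀ D A B : Fin 2,
      pd D (fun y => pd A (fun w => pd B Z w) y) x
        = deriv u (Z x) * pd D Z x * g x A B + u (Z x) * pd D (fun y => g y A B) x
          + ∑ C, (pd D (fun y => chr g ginv y C A B) x * pd C Z x
              + chr g ginv x C A B * pd D (fun y => pd C Z y) x) := by
    intro D A B
    have d1 : DifferentiableAt ℝ (fun y => u (Z y)) x :=
      ((hu.comp hZ).differentiable (by simp) x)
    have d2 : DifferentiableAt ℝ (fun y => g y A B) x :=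
      ((hgsmooth A B).differentiable (by simp) x)
    have d3 : ∀ C : Fin 2, DifferentiableAt ℝ
        (fun y => chr g ginv y C A B * pd C Z y) x := fun C =>
      (((hchr C A B).mul (aux_contDiff_pd hZ C)).differentiable (by simp) x)
    have d4 : DifferentiableAt ℝ (fun y => u (Z y) * g y A B) x := d1.mul d2
    have d5 : DifferentiableAt ℝ (fun y => ∑ C, chr g ginv y C A B * pd C Z y) x :=
      (ContDiff.sum fun C _ => (hchr C A B).mul (aux_contDiff_pd hZ C)).differentiable (by simp) x
    rw [aux_pd_congr (fun y => hz y A B) D x]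
    rw [aux_pd_add D x d4 d5]
    rw [aux_pd_mul D x d1 d2]
    rw [aux_pd_comp D x (hZ.differentiable (by simp) x) ((hu.differentiable (by simp)) (Z x))]
    rw [aux_pd_sum D x d3]
    have e4 : ∀ C : Fin 2, pd D (fun y => chr g ginv y C A B * pd C Z y) x
        = pd D (fun y => chr g ginv y C A B) x * pd C Z x
          + chr g ginv x C A B * pd D (fun y => pd C Z y) x := fun C =>
      aux_pd_mul D x ((hchr C A B).differentiable (by simp) x)
        ((aux_contDiff_pd hZ C).differentiable (by simp) x)
    simp only [e4]
  have main : deriv u (Z x) * pd 0 Z x * g x 1 B + u (Z x) * pd 0 (fun y => g y 1 B) x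
          + ∑ C, (pd 0 (fun y => chr g ginv y C 1 B) x * pd C Z x
              + chr g ginv x C 1 B * pd 0 (fun y => pd C Z y) x)
      = deriv u (Z x) * pd 1 Z x * g x 0 B + u (Z x) * pd 1 (fun y => g y 0 B) x
          + ∑ C, (pd 1 (fun y => chr g ginv y C 0 B) x * pd C Z x
              + chr g ginv x C 0 B * pd 1 (fun y => pd C Z y) x) := by
    rw [← exp 0 1 B, ← exp 1 0 B]
    exact aux_pd_comm (aux_contDiff_pd hZ B) 0 1 x
  have hz00 := hz x 0 0
  have hz01 := hz x 0 1
  have hz10 := hz x 1 0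
  have hz11 := hz x 1 1
  have fk01 := aux_first_kind hinv x 0 1 B
  have fk10 := aux_first_kind hinv x 1 0 B
  have hgf : (fun y : Fin 2 → ℝ => g y 1 0) = (fun y => g y 0 1) :=
    funext fun y => hgsym y 1 0
  simp only [hgf] at fk01 fk10 main ⊢
  simp only [KK, Fin.sum_univ_two] at main hz00 hz01 hz10 hz11 fk01 fk10 ⊢
  linear_combination main - chr g ginv x 0 1 B * hz00 - chr g ginv x 1 1 B * hz01
    + chr g ginv x 0 0 B * hz10 + chr g ginv x 1 0 B * hz11
    - u (Z x) * fk01 + u (Z x) * fk10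
private lemma aux_Lanti (g ginv : (Fin 2 → ℝ) → Fin 2 → Fin 2 → ℝ)
    (hgsmooth : ∀ A B, ContDiff ℝ (⊤ : ℕ∞) fun x => g x A B)
    (hginvsmooth : ∀ A B, ContDiff ℝ (⊤ : ℕ∞) fun x => ginv x A B)
    (hgsym : ∀ x A B, g x A B = g x B A)
    (hinv : ∀ x A B, ∑ C, g x A C * ginv x C B = if A = B then 1 else 0)
    (x : Fin 2 → ℝ) (D A F B : Fin 2) :
    ∑ E, g x F E * KK g ginv x E D A B + ∑ E, g x B E * KK g ginv x E D A F = 0 := by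
  have hchr : ∀ α μ ν, ContDiff ℝ (⊤ : ℕ∞) (fun y => chr g ginv y α μ ν) :=
    aux_chr_contDiff hgsmooth hginvsmooth
  -- Leibniz expansion of the derivative of the lowered Christoffel symbol
  have iL1 : ∀ D F A B : Fin 2,
      pd D (fun y => ∑ E, g y F E * chr g ginv y E A B) x
        = ∑ E, (pd D (fun y => g y F E) x * chr g ginv x E A B
            + g x F E * pd D (fun y => chr g ginv y E A B) x) := by
    intro D F A B
    have d1 : ∀ E : Fin 2, DifferentiableAt ℝ (fun y => g y F E * chr g ginv y E A B) x :=
      fun E => ((hgsmooth F E).mul (hchr E A B)).differentiable (by simp) x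
    rw [aux_pd_sum D x d1]
    have e : ∀ E : Fin 2, pd D (fun y => g y F E * chr g ginv y E A B) x
        = pd D (fun y => g y F E) x * chr g ginv x E A B
          + g x F E * pd D (fun y => chr g ginv y E A B) x := fun E =>
      aux_pd_mul D x ((hgsmooth F E).differentiable (by simp) x)
        ((hchr E A B).differentiable (by simp) x)
    simp only [e]
  -- explicit form of the derivative of the lowered Christoffel symbol
  have iL2 : ∀ D F A B : Fin 2,
      pd D (fun y => ∑ E, g y F E * chr g ginv y E A B) x
        = (1/2) * (pd D (fun y => pd A (fun w => g w F B) y) x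
            + pd D (fun y => pd B (fun w => g w F A) y) x
            - pd D (fun y => pd F (fun w => g w A B) y) x) := by
    intro D F A B
    rw [aux_pd_congr (fun y => aux_first_kind hinv y F A B) D x]
    have d1 : DifferentiableAt ℝ (fun y => pd A (fun w => g w F B) y) x :=
      (aux_contDiff_pd (hgsmooth F B) A).differentiable (by simp) x
    have d2 : DifferentiableAt ℝ (fun y => pd B (fun w => g w F A) y) x :=
      (aux_contDiff_pd (hgsmooth F A) B).differentiable (by simp) x
    have d3 : DifferentiableAt ℝ (fun y => pd F (fun w => g w A B) y) x :=
      (aux_contDiff_pd (hgsmooth A B) F).differentiable (by simp) x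
    rw [aux_pd_const_mul ((1:ℝ)/2) D x ((d1.fun_add d2).fun_sub d3)]
    rw [aux_pd_sub D x (d1.fun_add d2) d3, aux_pd_add D x d1 d2]
  -- metric compatibility
  have L3 : ∀ D F E0 : Fin 2, pd D (fun y => g y F E0) x
      = ∑ C, g x F C * chr g ginv x C D E0 + ∑ C, g x E0 C * chr g ginv x C D F := by
    intro D F E0
    have fk1 := aux_first_kind hinv x F D E0
    have fk2 := aux_first_kind hinv x E0 D F
    have s1 : pd D (fun y => g y E0 F) x = pd D (fun y => g y F E0) x :=
      aux_pd_congr (fun y => hgsym y E0 F) D x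
    have s2 : pd E0 (fun y => g y F D) x = pd E0 (fun y => g y D F) x :=
      aux_pd_congr (fun y => hgsym y F D) E0 x
    have s3 : pd F (fun y => g y E0 D) x = pd F (fun y => g y D E0) x :=
      aux_pd_congr (fun y => hgsym y E0 D) F x
    linear_combination -fk1 - fk2 - (1/2)*s1 - (1/2)*s2 - (1/2)*s3
  have a1 := iL1 D F A B
  have a2 := iL1 A F D B
  have a3 := iL1 D B A F
  have a4 := iL1 A B D F
  have b1 := iL2 D F A B
  have b2 := iL2 A F D B
  have b3 := iL2 D B A F
  have b4 := iL2 A B D F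
  have c1 := L3 D F 0
  have c2 := L3 D F 1
  have c3 := L3 A F 0
  have c4 := L3 A F 1
  have c5 := L3 D B 0
  have c6 := L3 D B 1
  have c7 := L3 A B 0
  have c8 := L3 A B 1
  have cm1 : pd D (fun y => pd A (fun w => g w F B) y) x
      = pd A (fun y => pd D (fun w => g w F B) y) x := aux_pd_comm (hgsmooth F B) D A x
  have cm2 : pd D (fun y => pd A (fun w => g w B F) y) x
      = pd A (fun y => pd D (fun w => g w B F) y) x := aux_pd_comm (hgsmooth B F) D A x
  have sA : pd D (fun y => pd B (fun w => g w F A) y) x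
      = pd D (fun y => pd B (fun w => g w A F) y) x := by
    rw [show (fun w : Fin 2 → ℝ => g w F A) = fun w => g w A F from funext fun w => hgsym w F A]
  have sB : pd D (fun y => pd F (fun w => g w A B) y) x
      = pd D (fun y => pd F (fun w => g w B A) y) x := by
    rw [show (fun w : Fin 2 → ℝ => g w A B) = fun w => g w B A from funext fun w => hgsym w A B]
  have sC : pd A (fun y => pd B (fun w => g w F D) y) x
      = pd A (fun y => pd B (fun w => g w D F) y) x := by
    rw [show (fun w : Fin 2 → ℝ => g w F D) = fun w => g w D F from funext fun w => hgsym w F D]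
  have sD : pd A (fun y => pd F (fun w => g w D B) y) x
      = pd A (fun y => pd F (fun w => g w B D) y) x := by
    rw [show (fun w : Fin 2 → ℝ => g w D B) = fun w => g w B D from funext fun w => hgsym w D B]
  have hg01 : g x 0 1 = g x 1 0 := hgsym x 0 1
  simp only [Fin.sum_univ_two] at a1 a2 a3 a4 b1 b2 b3 b4 c1 c2 c3 c4 c5 c6 c7 c8
  simp only [KK, Fin.sum_univ_two]
  linear_combination (b1 - a1) - (b2 - a2) + (b3 - a3) - (b4 - a4)
    - chr g ginv x 0 A B * c1 - chr g ginv x 1 A B * c2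
    + chr g ginv x 0 D B * c3 + chr g ginv x 1 D B * c4
    - chr g ginv x 0 A F * c5 - chr g ginv x 1 A F * c6
    + chr g ginv x 0 D F * c7 + chr g ginv x 1 D F * c8
    + (1/2)*cm1 + (1/2)*cm2 + (1/2)*sA - (1/2)*sB - (1/2)*sC + (1/2)*sD
    + ((chr g ginv x 1 A F * chr g ginv x 0 D B - chr g ginv x 0 A F * chr g ginv x 1 D B)
      - (chr g ginv x 1 D F * chr g ginv x 0 A B - chr g ginv x 0 D F * chr g ginv x 1 A B)) * hg01


end

/-- On a 2-dimensional Riemannian manifold, if `Hess Z = (u∘Z) ĥ` then the scalar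
    curvature satisfies `R(ĥ) dZ = -2 (u'∘Z) dZ`. -/
theorem stmt12 (g ginv : (Fin 2 → ℝ) → Fin 2 → Fin 2 → ℝ) (Z : (Fin 2 → ℝ) → ℝ)
    (u : ℝ → ℝ)
    (hgsmooth : ∀ A B, ContDiff ℝ (⊤ : ℕ∞) fun x => g x A B)
    (hginvsmooth : ∀ A B, ContDiff ℝ (⊤ : ℕ∞) fun x => ginv x A B)
    (hgsym : ∀ x A B, g x A B = g x B A)
    (hinv : ∀ x A B, ∑ C, g x A C * ginv x C B = if A = B then 1 else 0)
    (hriem : ∀ x (v : Fin 2 → ℝ), v ≠ 0 → 0 < ∑ A, ∑ B, g x A B * v A * v B)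
    (hZ : ContDiff ℝ (⊤ : ℕ∞) Z) (hu : ContDiff ℝ (⊤ : ℕ∞) u)
    (hhess : ∀ x A B, hess g ginv Z x A B = u (Z x) * g x A B) :
    ∀ x A, scal g ginv x * pd A Z x = -2 * deriv u (Z x) * pd A Z x := by
  intro x idx
  have hric : ∀ σ ν, Ric g ginv x σ ν = ∑ μ, KK g ginv x μ μ ν σ := fun σ ν => rfl
  -- scalar curvature in terms of the 2D curvature components
  have hscal : scal g ginv x
      = ginv x 0 1 * KK g ginv x 0 0 1 0 + ginv x 1 1 * KK g ginv x 0 0 1 1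
        - ginv x 0 0 * KK g ginv x 1 0 1 0 - ginv x 1 0 * KK g ginv x 1 0 1 1 := by
    simp only [scal, hric, Fin.sum_univ_two]
    rw [aux_KK_diag g ginv x 0 0 0, aux_KK_diag g ginv x 0 0 1,
      aux_KK_diag g ginv x 1 1 0, aux_KK_diag g ginv x 1 1 1,
      aux_KK_swap g ginv x 1 1 0 0, aux_KK_swap g ginv x 1 1 0 1]
    ring
  have star0 := aux_star g ginv Z u hgsmooth hginvsmooth hgsym hinv hZ hu hhess x 0
  have star1 := aux_star g ginv Z u hgsmooth hginvsmooth hgsym hinv hZ hu hhess x 1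
  have hL00 := aux_Lanti g ginv hgsmooth hginvsmooth hgsym hinv x 0 1 0 0
  have hL11 := aux_Lanti g ginv hgsmooth hginvsmooth hgsym hinv x 0 1 1 1
  have hL01 := aux_Lanti g ginv hgsmooth hginvsmooth hgsym hinv x 0 1 0 1
  have I1 : g x 0 0 * ginv x 0 0 + g x 0 1 * ginv x 1 0 = 1 := by
    have := hinv x 0 0; simp [Fin.sum_univ_two] at this; linarith
  have I2 : g x 0 0 * ginv x 0 1 + g x 0 1 * ginv x 1 1 = 0 := by
    have := hinv x 0 1; simp [Fin.sum_univ_two] at this; linarith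
  have I3 : g x 0 1 * ginv x 0 0 + g x 1 1 * ginv x 1 0 = 0 := by
    have := hinv x 1 0; simp [Fin.sum_univ_two] at this
    rw [hgsym x 1 0] at this; linarith
  have I4 : g x 0 1 * ginv x 0 1 + g x 1 1 * ginv x 1 1 = 1 := by
    have := hinv x 1 1; simp [Fin.sum_univ_two] at this
    rw [hgsym x 1 0] at this; linarith
  have hb : g x 1 0 = g x 0 1 := hgsym x 1 0
  simp only [Fin.sum_univ_two] at star0 star1 hL00 hL11 hL01
  simp only [hb] at star0 star1 hL11 hL01
  set a := g x 0 0 with ha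
  set b := g x 0 1 with hbb
  set c := g x 1 1 with hc
  set h00 := ginv x 0 0
  set h01 := ginv x 0 1
  set h10 := ginv x 1 0
  set h11 := ginv x 1 1
  set p := pd 0 Z x
  set q := pd 1 Z x
  set v := deriv u (Z x)
  set m00 := KK g ginv x 0 0 1 0
  set m01 := KK g ginv x 0 0 1 1
  set m10 := KK g ginv x 1 0 1 0
  set m11 := KK g ginv x 1 0 1 1
  set dd := a * c - b * b with hdd
  set nn := a * m01 + b * m11 with hnn
  -- inverse metric entries
  have e00 : dd * h00 = c := by linear_combination c * I1 - b * I3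
  have e01 : dd * h01 = -b := by linear_combination c * I2 - b * I4
  have e10 : dd * h10 = -b := by linear_combination a * I3 - b * I1
  have e11 : dd * h11 = a := by linear_combination a * I4 - b * I2
  have hDne : dd ≠ 0 := by
    intro h
    have hc0 : c = 0 := by linear_combination h00 * h - e00
    have hb0 : b = 0 := by linear_combination e01 - h01 * h
    have ha0 : a = 0 := by linear_combination h11 * h - e11
    have : (1:ℝ) = 0 := by linear_combination -I1 + h00 * ha0 + h10 * hb0
    exact one_ne_zero this
  -- antisymmetry consequences
  have N1 : a * m00 + b * m10 = 0 := by linarith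
  have N2 : b * m01 + c * m11 = 0 := by linarith
  have N3 : b * m00 + c * m10 = -nn := by rw [hnn]; linarith
  have dm00 : dd * m00 = b * nn := by linear_combination c * N1 - b * N3
  have dm10 : dd * m10 = -(a * nn) := by linear_combination a * N3 - b * N1
  have dm01 : dd * m01 = c * nn := by linear_combination c * hnn.symm - b * N2
  have dm11 : dd * m11 = -(b * nn) := by linear_combination a * N2 - b * hnn.symm
  have hscal2 : scal g ginv x * (dd * dd) = 2 * nn * dd := by
    rw [hscal]
    linear_combination (dd * m00) * e01 - b * dm00 + (dd * m01) * e11 + a * dm01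
      - (dd * m10) * e00 - c * dm10 - (dd * m11) * e10 + b * dm11
  have hscalD : scal g ginv x * dd = 2 * nn := by
    apply mul_right_cancel₀ hDne
    linear_combination hscal2
  have T0 : (v * dd + nn) * (b * p - a * q) = 0 := by
    linear_combination dd * star0 - p * dm00 - q * dm10
  have T1 : (v * dd + nn) * (c * p - b * q) = 0 := by
    linear_combination dd * star1 - p * dm01 - q * dm11
  have hp : (v * dd + nn) * p = 0 := by
    apply mul_right_cancel₀ hDne
    linear_combination a * T1 - b * T0
  have hq : (v * dd + nn) * q = 0 := by
    apply mul_right_cancel₀ hDne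
    linear_combination b * T1 - c * T0
  fin_cases idx
  · show scal g ginv x * p = -2 * v * p
    apply mul_right_cancel₀ hDne
    linear_combination p * hscalD + 2 * hp
  · show scal g ginv x * q = -2 * v * q
    apply mul_right_cancel₀ hDne
    linear_combination q * hscalD + 2 * hq
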